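/- arXiv:2209.00898 — 4 statements merged into one kernel-verified Lean document; each statement's English description precedes it below -/
import Mathlib

section
/- Let A be a locally coherent Grothendieck category in which every object of fp A (the finitely presented objects) has finite composition length. Then every injective object Q of A has finite endolength, i.e. Hom_A(W, Q) has finite length as an End_A(Q)-module for every finitely presented object W. -/
/-!
Statement 2: In a locally coherent Grothendieck category `A` in which every finitely
presented object has finite composition length (i.e. `A` is locally finite), every injective
object `Q` has finite endolength: `Hom_A(W, Q)` has finite length as an `End_A(Q)`-module
for every finitely presented `W`.
-/

open CategoryTheory CategoryTheory.Limits

universe v u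

variable {A : Type u} [Category.{v} A] [Abelian A]

/-- An object is finitely presented if corepresenting preserves filtered colimits. -/
def FinPres (X : A) : Prop :=
  ∀ (J : Type v) [SmallCategory J] [IsFiltered J],
    Nonempty (PreservesColimitsOfShape J (coyoneda.obj (Opposite.op X)))

/-- An object has finite composition length: its subobject lattice is well-founded in both
directions. -/
def FiniteLengthObj (X : A) : Prop :=
  WellFoundedGT (Subobject X) ∧ WellFoundedLT (Subobject X)

/-- A presentation of `X` as a filtered colimit of objects satisfying `P`. -/
structure FilteredPresentation (P : A → Prop) (X : A) where
  J : Type v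
  [cat : SmallCategory J]
  [filt : IsFiltered J]
  D : J ⥤ A
  fp : ∀ j : J, P (D.obj j)
  c : Cocone D
  isColim : IsColimit c
  iso : c.pt ≅ X

attribute [instance] FilteredPresentation.cat FilteredPresentation.filt

/-!
For `Q` injective, a map `g : W ⟶ Q` vanishing on the joint kernel of `f₁, …, fₙ : W ⟶ Q`
factors through `(f₁, …, fₙ) : W ⟶ Qⁿ`, hence is an `End Q`-combination of the `fᵢ`. By the
descending chain condition on subobjects of `W`, the kernels of the maps in a submodule `M` have
a finite intersection contained in all of them, and `M` is recovered from it as the maps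
vanishing there. So `M ↦ ⋂_{g ∈ M} ker g` embeds the submodules of `Hom(W, Q)`, reversing order,
into the subobjects of `W`, and both chain conditions pass from `W` to `Hom(W, Q)`.
-/

theorem exists_finset_subset_inf_le {α ι : Type*} [SemilatticeInf α] [OrderTop α]
    [WellFoundedLT α] (f : ι → α) (S : Set ι) :
    ∃ s : Finset ι, ↑s ⊆ S ∧ ∀ i ∈ S, s.inf f ≤ f i := by
  classical
  obtain ⟨s, hsS, hmin⟩ := (InvImage.wf (fun s : Finset ι => s.inf f) wellFounded_lt).has_min
    {s | ↑s ⊆ S} ⟨∅, by simp⟩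
  refine ⟨s, hsS, fun i hi => ?_⟩
  have hins : (insert i s).inf f = s.inf f :=
    (Finset.inf_mono (Finset.subset_insert i s)).eq_of_not_lt
      (hmin _ (by simpa using Set.insert_subset hi hsS))
  exact hins ▸ Finset.inf_le (Finset.mem_insert_self i s)

namespace CategoryTheory

variable {C : Type*} [Category C] [Abelian C]

theorem Injective.exists_comp_eq_of_kernelSubobject_le {Q X Y : C} [Injective Q]
    (a : X ⟶ Y) (b : X ⟶ Q) (h : kernelSubobject a ≤ kernelSubobject b) :
    ∃ φ : Y ⟶ Q, a ≫ φ = b := by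
  have hb : kernel.ι a ≫ b = 0 := by
    rw [← kernelSubobject_arrow', Category.assoc, ← Subobject.ofLE_arrow h, Category.assoc,
      kernelSubobject_arrow_comp, comp_zero, comp_zero]
  refine ⟨Injective.factorThru (cokernel.desc _ b hb) (Abelian.factorThruCoimage a), ?_⟩
  calc a ≫ _ = Abelian.coimage.π a ≫ Abelian.factorThruCoimage a ≫ _ := by
        rw [← Category.assoc, Abelian.coimage.fac]
    _ = b := by rw [Injective.comp_factorThru]; exact cokernel.π_desc _ _ _

theorem Injective.mem_span_of_inf_kernelSubobject_le {Q W : C} [Injective Q]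
    (s : Finset (W ⟶ Q)) {g : W ⟶ Q} (h : s.inf (kernelSubobject ·) ≤ kernelSubobject g) :
    g ∈ Submodule.span (End Q) (s : Set (W ⟶ Q)) := by
  have := Abelian.hasFiniteBiproducts (C := C)
  have hker : kernelSubobject (biproduct.lift (Subtype.val : s → (W ⟶ Q))) ≤
      s.inf (kernelSubobject ·) :=
    Finset.le_inf fun f hf => by
      simpa using kernelSubobject_comp_le (biproduct.lift (Subtype.val : s → (W ⟶ Q)))
        (biproduct.π (fun _ : s => Q) ⟨f, hf⟩)
  obtain ⟨φ, hφ⟩ := Injective.exists_comp_eq_of_kernelSubobject_le _ g (hker.trans h)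
  let c : s → End Q := fun i => biproduct.ι (fun _ : s => Q) i ≫ φ
  have hsum : g = ∑ i : s, c i • (i : W ⟶ Q) := by
    have htotal := IsBilimit.total (biproduct.isBilimit fun _ : s => Q)
    simp only [biproduct.bicone_π, biproduct.bicone_ι] at htotal
    rw [← hφ, ← Category.id_comp φ, ← htotal]
    simp [Preadditive.sum_comp, Preadditive.comp_sum, c, End.smul_right]
  rw [hsum]
  exact Submodule.sum_mem _ fun i _ => Submodule.smul_mem _ _ (Submodule.subset_span i.2)

theorem Injective.mem_iff_inf_kernelSubobject_le {Q W : C} [Injective Q]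
    {M : Submodule (End Q) (W ⟶ Q)} {s : Finset (W ⟶ Q)} (hsM : ↑s ⊆ (M : Set (W ⟶ Q)))
    (hs : ∀ g ∈ M, s.inf (kernelSubobject ·) ≤ kernelSubobject g) (g : W ⟶ Q) :
    g ∈ M ↔ s.inf (kernelSubobject ·) ≤ kernelSubobject g :=
  ⟨hs g, fun h => Submodule.span_le.2 hsM (mem_span_of_inf_kernelSubobject_le s h)⟩

theorem Injective.isFiniteLength_hom {Q W : C} [Injective Q] [WellFoundedLT (Subobject W)]
    [WellFoundedGT (Subobject W)] : IsFiniteLength (End Q) (W ⟶ Q) := by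
  choose s hsM hs using fun M : Submodule (End Q) (W ⟶ Q) =>
    exists_finset_subset_inf_le (kernelSubobject ·) (M : Set (W ⟶ Q))
  let Φ : (Submodule (End Q) (W ⟶ Q))ᵒᵈ ↪o Subobject W :=
    OrderEmbedding.ofMapLEIff (fun M => (s M.ofDual).inf (kernelSubobject ·)) fun M N =>
      ⟨fun h g hg => (mem_iff_inf_kernelSubobject_le (hsM _) (hs _) g).2 (h.trans (hs _ g hg)),
        fun h => Finset.le_inf fun g hg => hs _ g (h (hsM _ hg))⟩
  have : WellFoundedGT (Submodule (End Q) (W ⟶ Q)) := Φ.strictMono.wellFoundedLT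
  have : WellFoundedLT (Submodule (End Q) (W ⟶ Q)) := Φ.strictMono.wellFoundedGT
  rw [isFiniteLength_iff_isNoetherian_isArtinian, isNoetherian_iff']
  exact ⟨inferInstance, inferInstance⟩

end CategoryTheory

theorem injective_finite_endolength_of_locally_finite_general
    -- `A` is locally finite: every finitely presented object has finite length
    (hlf : ∀ X : A, FinPres X → FiniteLengthObj X) :
    ∀ Q : A, Injective Q → ∀ W : A, FinPres W → IsFiniteLength (End Q) (W ⟶ Q) := by
  intro Q _ W hW
  obtain ⟨_, _⟩ := hlf W hW
  exact Injective.isFiniteLength_hom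

theorem injective_finite_endolength_of_locally_finite
    [HasFilteredColimitsOfSize.{v, v} A] [HasBinaryBiproducts A]
    -- `A` is Grothendieck: filtered colimits are exact (AB5)
    [AB5 A]
    -- the finitely presented objects form a skeletally small abelian subcategory
    (hsmall : EssentiallySmall.{v} (ObjectProperty.FullSubcategory fun X : A => FinPres X))
    (hker : ∀ ⦃X Y : A⦄ (f : X ⟶ Y), FinPres X → FinPres Y → FinPres (kernel f))
    (hcoker : ∀ ⦃X Y : A⦄ (f : X ⟶ Y), FinPres X → FinPres Y → FinPres (cokernel f))
    (hbiprod : ∀ X Y : A, FinPres X → FinPres Y → FinPres (X ⊞ Y))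
    -- every object is a filtered colimit of finitely presented objects
    (hcolim : ∀ X : A, Nonempty (FilteredPresentation (FinPres (A := A)) X))
    -- `A` is locally finite: every finitely presented object has finite length
    (hlf : ∀ X : A, FinPres X → FiniteLengthObj X) :
    ∀ Q : A, Injective Q → ∀ W : A, FinPres W → IsFiniteLength (End Q) (W ⟶ Q) :=
  injective_finite_endolength_of_locally_finite_general hlf
end

section
/- Let C be a skeletally small triangulated category with a generator X (i.e., the smallest thick subcategory containing X is C). Then every prime rank function on C is irreducible. -/
/-!
Statement 10: If a skeletally small triangulated category `C` has a generator `X` (the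
smallest thick subcategory containing `X` is all of `C`), then every prime rank function on
`C` is irreducible.
-/

open CategoryTheory CategoryTheory.Limits CategoryTheory.Pretriangulated

universe v u

variable (C : Type u) [Category.{v} C] [Preadditive C] [HasZeroObject C] [HasShift C ℤ]
  [∀ n : ℤ, (shiftFunctor C n).Additive] [Pretriangulated C] [HasBinaryBiproducts C]
  [EssentiallySmall.{v} C]

/-- A rank function on a triangulated category. -/
structure RankFunction where
  rank : ∀ ⦃X Y : C⦄, (X ⟶ Y) → ℝ
  nonneg : ∀ ⦃X Y : C⦄ (f : X ⟶ Y), 0 ≤ rank f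
  additive : ∀ ⦃X₁ Y₁ X₂ Y₂ : C⦄ (f : X₁ ⟶ Y₁) (g : X₂ ⟶ Y₂),
    rank (biprod.map f g) = rank f + rank g
  rankNullity : ∀ (T : Triangle C), (T ∈ distTriang C) →
    rank T.mor₁ + rank T.mor₂ = rank (𝟙 T.obj₂)
  shiftInv : ∀ ⦃X Y : C⦄ (f : X ⟶ Y),
    rank ((shiftFunctor C (1 : ℤ)).map f) = rank f

/-- A thick subcategory of `C`, encoded as a set of objects: it contains the zero objects,
is closed under isomorphisms, shifts, extensions (cones) and direct summands. -/
structure IsThickSet (P : Set C) : Prop where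
  zero : ∀ Z : C, IsZero Z → Z ∈ P
  iso : ∀ ⦃A B : C⦄, (A ≅ B) → A ∈ P → B ∈ P
  shift : ∀ (A : C) (n : ℤ), A ∈ P → (shiftFunctor C n).obj A ∈ P
  ext₂ : ∀ (T : Triangle C), (T ∈ distTriang C) → T.obj₁ ∈ P → T.obj₃ ∈ P → T.obj₂ ∈ P
  summand : ∀ A B : C, (A ⊞ B) ∈ P → A ∈ P

/-- `X` is a generator of `C`: the smallest thick subcategory containing `X` is `C`. -/
def IsGenerator (X : C) : Prop :=
  ∀ P : Set C, IsThickSet C P → X ∈ P → ∀ Y : C, Y ∈ P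

variable {C}

/-- Integral rank function. -/
def RankFunction.Integral (ρ : RankFunction C) : Prop :=
  ∀ ⦃X Y : C⦄ (f : X ⟶ Y), ∃ n : ℤ, ρ.rank f = n

/-- Non-zero rank function. -/
def RankFunction.Nonzero (ρ : RankFunction C) : Prop :=
  ∃ (X Y : C) (f : X ⟶ Y), ρ.rank f ≠ 0

/-- Irreducible rank function. -/
def RankFunction.Irreducible (ρ : RankFunction C) : Prop :=
  ρ.Integral ∧ ρ.Nonzero ∧
    ¬ ∃ σ τ : RankFunction C, σ.Integral ∧ τ.Integral ∧ σ.Nonzero ∧ τ.Nonzero ∧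
      ∀ ⦃X Y : C⦄ (f : X ⟶ Y), ρ.rank f = σ.rank f + τ.rank f

/-- Prime rank function: integral, with a generator on whose identity it takes value 1. -/
def RankFunction.Prime (ρ : RankFunction C) : Prop :=
  ρ.Integral ∧ ∃ X : C, IsGenerator C X ∧ ρ.rank (𝟙 X) = 1

/-!
If `ρ = σ + τ` with `σ, τ` integral and `ρ(1_X) = 1` for a generator `X`, then one of the
non-negative integers `σ(1_X)`, `τ(1_X)` vanishes, say `σ(1_X) = 0`. The objects `K` with
`σ(1_K) = 0` form a thick subcategory, which then contains `X` and hence every object; since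
`σ(f) ≤ σ(1_B)` for every `f : A ⟶ B`, this forces `σ = 0`.
-/

open ZeroObject

namespace RankFunction

omit [EssentiallySmall.{v} C]

variable (ρ : RankFunction C)

lemma rank_le_rank_id_target {A B : C} (f : A ⟶ B) : ρ.rank f ≤ ρ.rank (𝟙 B) := by
  obtain ⟨Z, g, h, hT⟩ := distinguished_cocone_triangle f
  have : ρ.rank f + ρ.rank g = ρ.rank (𝟙 B) := ρ.rankNullity _ hT
  linarith [ρ.nonneg g]

lemma rank_le_rank_id_source {A B : C} (f : A ⟶ B) : ρ.rank f ≤ ρ.rank (𝟙 A) := by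
  obtain ⟨Z, g, h, hT⟩ := distinguished_cocone_triangle f
  let T := (Triangle.mk f g h).invRotate
  have : ρ.rank T.mor₁ + ρ.rank f = ρ.rank (𝟙 A) :=
    ρ.rankNullity _ (inv_rot_of_distTriang _ hT)
  linarith [ρ.nonneg T.mor₁]

lemma rank_id_le_of_iso {A B : C} (e : A ≅ B) : ρ.rank (𝟙 B) ≤ ρ.rank (𝟙 A) := by
  have hT : Triangle.mk e.hom (0 : B ⟶ 0) 0 ∈ distTriang C :=
    (Triangle.distinguished_iff_of_isZero₃ _ (isZero_zero C)).2 (inferInstanceAs (IsIso e.hom))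
  have hB : ρ.rank (𝟙 B) + ρ.rank (0 : B ⟶ 0) = ρ.rank (𝟙 B) :=
    ρ.rankNullity _ (contractible_distinguished B)
  have he : ρ.rank e.hom + ρ.rank (0 : B ⟶ 0) = ρ.rank (𝟙 B) := ρ.rankNullity _ hT
  linarith [ρ.rank_le_rank_id_source e.hom]

lemma rank_id_congr {A B : C} (e : A ≅ B) : ρ.rank (𝟙 A) = ρ.rank (𝟙 B) :=
  le_antisymm (ρ.rank_id_le_of_iso e.symm) (ρ.rank_id_le_of_iso e)

lemma rank_id_biprod (A B : C) :
    ρ.rank (𝟙 (A ⊞ B)) = ρ.rank (𝟙 A) + ρ.rank (𝟙 B) := by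
  rw [← ρ.additive, show biprod.map (𝟙 A) (𝟙 B) = 𝟙 (A ⊞ B) by ext <;> simp]

lemma rank_id_of_isZero {Z : C} (hZ : IsZero Z) : ρ.rank (𝟙 Z) = 0 := by
  have h := ρ.rank_id_congr (hZ.iso ((biprod_isZero_iff Z Z).2 ⟨hZ, hZ⟩))
  linarith [ρ.rank_id_biprod Z Z]

lemma rank_id_shift_one (A : C) : ρ.rank (𝟙 (A⟦(1 : ℤ)⟧)) = ρ.rank (𝟙 A) := by
  simpa using ρ.shiftInv (𝟙 A)

lemma rank_id_shift_add_one (A : C) (n : ℤ) :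
    ρ.rank (𝟙 (A⟦n + 1⟧)) = ρ.rank (𝟙 (A⟦n⟧)) := by
  rw [ρ.rank_id_congr ((shiftFunctorAdd C n 1).app A)]
  exact ρ.rank_id_shift_one _

lemma rank_id_shift (A : C) (n : ℤ) : ρ.rank (𝟙 (A⟦n⟧)) = ρ.rank (𝟙 A) := by
  induction n using Int.induction_on with
  | zero => exact ρ.rank_id_congr ((shiftFunctorZero C ℤ).app A)
  | succ n ih => rw [rank_id_shift_add_one, ih]
  | pred n ih => rw [← ih, ← ρ.rank_id_shift_add_one, sub_add_cancel]

def objKer : Set C := {A | ρ.rank (𝟙 A) = 0}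

lemma mem_objKer {A : C} : A ∈ ρ.objKer ↔ ρ.rank (𝟙 A) = 0 := Iff.rfl

lemma isThickSet_objKer : IsThickSet C ρ.objKer where
  zero _ hZ := ρ.rank_id_of_isZero hZ
  iso _ _ e hA := (ρ.rank_id_congr e).symm.trans hA
  shift A n hA := (ρ.rank_id_shift A n).trans hA
  ext₂ T hT h₁ h₃ := by
    rw [mem_objKer] at h₁ h₃ ⊢
    linarith [ρ.rankNullity T hT, ρ.rank_le_rank_id_source T.mor₁,
      ρ.rank_le_rank_id_target T.mor₂, ρ.nonneg T.mor₁, ρ.nonneg T.mor₂]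
  summand A B hAB := by
    rw [mem_objKer] at hAB ⊢
    rw [rank_id_biprod] at hAB
    linarith [ρ.nonneg (𝟙 A), ρ.nonneg (𝟙 B)]

lemma rank_eq_zero_of_isGenerator {X : C} (hX : IsGenerator C X) (h : ρ.rank (𝟙 X) = 0)
    {A B : C} (f : A ⟶ B) : ρ.rank f = 0 :=
  le_antisymm ((ρ.rank_le_rank_id_target f).trans_eq (hX _ ρ.isThickSet_objKer h B)) (ρ.nonneg f)

lemma not_nonzero_of_isGenerator {X : C} (hX : IsGenerator C X) (h : ρ.rank (𝟙 X) = 0) :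
    ¬ ρ.Nonzero :=
  fun ⟨_, _, f, hf⟩ ↦ hf (ρ.rank_eq_zero_of_isGenerator hX h f)

lemma rank_eq_zero_or_of_add_eq_one {σ τ : RankFunction C} (hσ : σ.Integral)
    (hτ : τ.Integral) {A B : C} (f : A ⟶ B) (h : σ.rank f + τ.rank f = 1) :
    σ.rank f = 0 ∨ τ.rank f = 0 := by
  obtain ⟨m, hm⟩ := hσ f
  obtain ⟨n, hn⟩ := hτ f
  have hm₀ : (0 : ℝ) ≤ m := hm ▸ σ.nonneg f
  have hn₀ : (0 : ℝ) ≤ n := hn ▸ τ.nonneg f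
  rw [hm, hn] at h ⊢
  norm_cast at *
  omega

end RankFunction

theorem prime_rankFunction_irreducible_general
    (ρ : RankFunction C) (hprime : ρ.Prime) : ρ.Irreducible := by
  obtain ⟨hint, X, hX, hX1⟩ := hprime
  refine ⟨hint, ⟨X, X, 𝟙 X, by simp [hX1]⟩, ?_⟩
  rintro ⟨σ, τ, hσ, hτ, hσ₀, hτ₀, hsum⟩
  have hsplit : σ.rank (𝟙 X) + τ.rank (𝟙 X) = 1 := by rw [← hsum, hX1]
  rcases RankFunction.rank_eq_zero_or_of_add_eq_one hσ hτ (𝟙 X) hsplit with h | h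
  · exact σ.not_nonzero_of_isGenerator hX h hσ₀
  · exact τ.not_nonzero_of_isGenerator hX h hτ₀

theorem prime_rankFunction_irreducible (hgen : ∃ X : C, IsGenerator C X)
    (ρ : RankFunction C) (hprime : ρ.Prime) : ρ.Irreducible :=
  prime_rankFunction_irreducible_general ρ hprime
end

section
/- Let Z be a module over a ring R with translation-invariant partial order, let q ∈ R with q+1 Z-regular, and let C be a skeletally small triangulated category. If ρ_ob is a Z-valued q-rank function on objects of C, then the assignment ρ(f) := z_f, where z_f ∈ Z_{≥0} is the unique element with (q+1)z_f = ρ_ob(Y) − ρ_ob(Cone f) + ρ_ob(ΣX) for f : X → Y, defines a Z-valued q-rank function on morphisms: it is q-Σ-invariant, additive on direct sums, and satisfies ρ(f) + ρ(g) = ρ(1_Y) for every triangle X →f Y →g Z → ΣX. -/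
/-!
Since `q + 1` is `Z`-regular, `z_f` is determined by `ρ_ob(Y) - ρ_ob(Cone f) + ρ_ob(ΣX)`, and this
does not depend on the chosen cone once `ρ_ob` is invariant under isomorphism. Invariance comes
from the congruence axiom on the distinguished triangles `0 → A → B → Σ0` with `A → B` an
isomorphism: it makes both `ρ_ob A - ρ_ob B` and its negative `(q+1)`-multiples of non-negative
elements, so it vanishes. This needs `ρ_ob 0 = 0`, obtained in the same way from the triangles
`0 → 0 → Σ0` and `0 → 0 → Σ0 ⊕ 0 ⊕ 0`, whose defects are `ρ_ob 0` and `-ρ_ob 0`.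

The axioms on morphisms then follow by cancelling `q + 1` in the defining identity, applied to the
direct sum of two distinguished triangles (additivity), to a triangle, its rotation and the
contractible triangle on `Y` (rank-nullity), and to the triple rotation of a triangle with the
signs of its first and last maps removed (`q`-Σ-invariance).
-/

open CategoryTheory CategoryTheory.Limits CategoryTheory.Pretriangulated

universe v u w

open ZeroObject

namespace CategoryTheory.Limits

variable {C : Type*} [Category C] [HasZeroMorphisms C]

lemma IsZero.biprod {X Y : C} [HasBinaryBiproduct X Y] (hX : IsZero X) (hY : IsZero Y) :
    IsZero (X ⊞ Y) :=
  (IsZero.iff_id_eq_zero _).2 (biprod.hom_ext _ _ (hX.eq_of_tgt _ _) (hY.eq_of_tgt _ _))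

@[simps]
noncomputable def biprodIsoPi (F : WalkingPair → C) [HasBinaryBiproduct (F .left) (F .right)]
    [HasProduct F] : F .left ⊞ F .right ≅ ∏ᶜ F where
  hom := Pi.lift fun | .left => biprod.fst | .right => biprod.snd
  inv := biprod.lift (Pi.π F .left) (Pi.π F .right)
  hom_inv_id := by ext <;> simp
  inv_hom_id := by ext ⟨_ | _⟩ <;> simp

end CategoryTheory.Limits

namespace CategoryTheory.Pretriangulated

variable {C : Type*} [Category C] [Preadditive C] [HasZeroObject C] [HasShift C ℤ]
  [∀ n : ℤ, (CategoryTheory.shiftFunctor C n).Additive] [Pretriangulated C]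

lemma Triangle.biprod_distinguished (T₁ T₂ : Triangle C) (hT₁ : T₁ ∈ distTriang C)
    (hT₂ : T₂ ∈ distTriang C) :
    ∃ h : T₁.obj₃ ⊞ T₂.obj₃ ⟶ (T₁.obj₁ ⊞ T₂.obj₁)⟦(1 : ℤ)⟧,
      Triangle.mk (biprod.map T₁.mor₁ T₂.mor₁) (biprod.map T₁.mor₂ T₂.mor₂) h ∈ distTriang C := by
  -- Replacing `T₁, T₂` by a family keeps `match` terms out of the goals; `simp` cannot see
  -- through `Triangle.mk` here, hence the `show`s below.
  obtain ⟨T, rfl, rfl⟩ : ∃ T : WalkingPair → Triangle C, T .left = T₁ ∧ T .right = T₂ :=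
    ⟨fun | .left => T₁ | .right => T₂, rfl, rfl⟩
  let e₁ := biprodIsoPi fun j => (T j).obj₁
  let e₂ := biprodIsoPi fun j => (T j).obj₂
  let e₃ := biprodIsoPi fun j => (T j).obj₃
  refine ⟨e₃.hom ≫ (productTriangle T).mor₃ ≫ e₁.inv⟦(1 : ℤ)⟧', ?_⟩
  refine isomorphic_distinguished _ (productTriangle_distinguished T ?_) _
    (Triangle.isoMk _ _ e₁ e₂ e₃ ?_ ?_ ?_)
  · rintro (_ | _) <;> assumption
  · show biprod.map (T .left).mor₁ (T .right).mor₁ ≫ e₂.hom =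
      e₁.hom ≫ Limits.Pi.map fun j => (T j).mor₁
    exact Pi.hom_ext _ _ (by rintro (_ | _) <;> simp [e₁, e₂])
  · show biprod.map (T .left).mor₂ (T .right).mor₂ ≫ e₃.hom =
      e₂.hom ≫ Limits.Pi.map fun j => (T j).mor₂
    exact Pi.hom_ext _ _ (by rintro (_ | _) <;> simp [e₂, e₃])
  · show (e₃.hom ≫ _ ≫ e₁.inv⟦(1 : ℤ)⟧') ≫ e₁.hom⟦(1 : ℤ)⟧' = e₃.hom ≫ _
    simp [← Functor.map_comp]

lemma Triangle.neg₁₃_distinguished (T : Triangle C) (hT : T ∈ distTriang C) :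
    Triangle.mk (-T.mor₁) T.mor₂ (-T.mor₃) ∈ distTriang C :=
  isomorphic_distinguished _ hT _ <|
    Triangle.isoMk _ _ (show T.obj₁ ≅ T.obj₁ from ⟨-𝟙 _, -𝟙 _, by simp, by simp⟩)
      (Iso.refl _) (Iso.refl _) (by simp [Triangle.mk]) (by simp [Triangle.mk])
      (by simp [Triangle.mk])

noncomputable def cone {X Y : C} (f : X ⟶ Y) : C :=
  (distinguished_cocone_triangle f).choose

lemma exists_distinguished_cone {X Y : C} (f : X ⟶ Y) :
    ∃ (g : Y ⟶ cone f) (h : cone f ⟶ X⟦(1 : ℤ)⟧), Triangle.mk f g h ∈ distTriang C :=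
  (distinguished_cocone_triangle f).choose_spec

lemma apply_cone_eq {α : Type*} {F : C → α} (hF : ∀ {A B : C}, (A ≅ B) → F A = F B)
    {T : Triangle C} (hT : T ∈ distTriang C) : F (cone T.mor₁) = F T.obj₃ := by
  obtain ⟨g, h, hc⟩ := exists_distinguished_cone T.mor₁
  exact hF (Triangle.π₃.mapIso
    (isoTriangleOfIso₁₂ _ _ hc hT (Iso.refl _) (Iso.refl _) (by simp [Triangle.mk])))

end CategoryTheory.Pretriangulated

theorem eq_zero_of_eq_smul_of_neg_eq_smul {R Z : Type*} [AddCommGroup Z] [PartialOrder Z]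
    [AddLeftMono Z] [DistribSMul R Z] {r : R} (hr : Function.Injective fun z : Z => r • z)
    {x a b : Z} (ha : 0 ≤ a) (hb : 0 ≤ b) (hxa : x = r • a) (hxb : -x = r • b) : x = 0 := by
  have hab : a + b = 0 := hr (by simp only [smul_add, smul_zero, ← hxa, ← hxb, add_neg_cancel])
  rw [hxa, ((add_eq_zero_iff_of_nonneg ha hb).1 hab).1, smul_zero]

namespace CategoryTheory.Pretriangulated.RankFunction

variable {C : Type*} [Category C] [Preadditive C] [HasZeroObject C] [HasShift C ℤ]
  [∀ n : ℤ, (CategoryTheory.shiftFunctor C n).Additive] [Pretriangulated C]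
  {R Z : Type*} [Semiring R] [AddCommGroup Z] [Module R Z] {q : R} {ρob : C → Z}

def defect (ρob : C → Z) (T : Triangle C) : Z :=
  ρob T.obj₂ - ρob T.obj₃ + ρob (T.obj₁⟦(1 : ℤ)⟧)

section

variable {ρ : ∀ ⦃X Y : C⦄, (X ⟶ Y) → Z}

lemma map_biprod (hreg : Function.Injective fun z : Z => (q + 1) • z)
    (hadd : ∀ X Y : C, ρob (X ⊞ Y) = ρob X + ρob Y)
    (hshift : ∀ X : C, ρob (X⟦(1 : ℤ)⟧) = q • ρob X)
    (hρ : ∀ T ∈ distTriang C, (q + 1) • ρ T.mor₁ = defect ρob T)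
    {X₁ Y₁ X₂ Y₂ : C} (f₁ : X₁ ⟶ Y₁) (f₂ : X₂ ⟶ Y₂) :
    ρ (biprod.map f₁ f₂) = ρ f₁ + ρ f₂ := by
  obtain ⟨W₁, g₁, h₁, hT₁⟩ := distinguished_cocone_triangle f₁
  obtain ⟨W₂, g₂, h₂, hT₂⟩ := distinguished_cocone_triangle f₂
  obtain ⟨h, hT⟩ := Triangle.biprod_distinguished _ _ hT₁ hT₂
  have e : (q + 1) • ρ (biprod.map f₁ f₂) =
      ρob (Y₁ ⊞ Y₂) - ρob (W₁ ⊞ W₂) + ρob ((X₁ ⊞ X₂)⟦(1 : ℤ)⟧) := hρ _ hT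
  have e₁ : (q + 1) • ρ f₁ = ρob Y₁ - ρob W₁ + ρob (X₁⟦(1 : ℤ)⟧) := hρ _ hT₁
  have e₂ : (q + 1) • ρ f₂ = ρob Y₂ - ρob W₂ + ρob (X₂⟦(1 : ℤ)⟧) := hρ _ hT₂
  apply hreg
  simp only [smul_add, e, e₁, e₂, hadd, hshift]
  abel

lemma add_eq_apply_id (hreg : Function.Injective fun z : Z => (q + 1) • z)
    (hzero : ρob 0 = 0) (hρ : ∀ T ∈ distTriang C, (q + 1) • ρ T.mor₁ = defect ρob T)
    (T : Triangle C) (hT : T ∈ distTriang C) : ρ T.mor₁ + ρ T.mor₂ = ρ (𝟙 T.obj₂) := by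
  have e₂ : (q + 1) • ρ T.mor₂ = ρob T.obj₃ - ρob (T.obj₁⟦(1 : ℤ)⟧) + ρob (T.obj₂⟦(1 : ℤ)⟧) :=
    hρ _ (rot_of_distTriang _ hT)
  have e₃ : (q + 1) • ρ (𝟙 T.obj₂) = ρob T.obj₂ - ρob 0 + ρob (T.obj₂⟦(1 : ℤ)⟧) :=
    hρ _ (contractible_distinguished T.obj₂)
  apply hreg
  simp only [smul_add, hρ _ hT, e₂, e₃, defect, hzero]
  abel

lemma map_shift (hreg : Function.Injective fun z : Z => (q + 1) • z)
    (hshift : ∀ X : C, ρob (X⟦(1 : ℤ)⟧) = q • ρob X)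
    (hρ : ∀ T ∈ distTriang C, (q + 1) • ρ T.mor₁ = defect ρob T)
    {X Y : C} (f : X ⟶ Y) : ρ (f⟦(1 : ℤ)⟧') = q • ρ f := by
  obtain ⟨W, g, h, hT⟩ := distinguished_cocone_triangle f
  have e : (q + 1) • ρ f = ρob Y - ρob W + ρob (X⟦(1 : ℤ)⟧) := hρ _ hT
  have e' : (q + 1) • ρ (- -f⟦(1 : ℤ)⟧') =
      ρob (Y⟦(1 : ℤ)⟧) - ρob (W⟦(1 : ℤ)⟧) + ρob (X⟦(1 : ℤ)⟧⟦(1 : ℤ)⟧) :=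
    hρ _ (Triangle.neg₁₃_distinguished _
      (rot_of_distTriang _ (rot_of_distTriang _ (rot_of_distTriang _ hT))))
  rw [neg_neg] at e'
  apply hreg
  dsimp only
  rw [e', smul_smul, show (q + 1) * q = q * (q + 1) by rw [add_mul, mul_add, one_mul, mul_one],
    mul_smul, e]
  simp only [hshift, smul_add, smul_sub]

end

variable [PartialOrder Z]

def SatisfiesCongruence (q : R) (ρob : C → Z) : Prop :=
  ∀ T ∈ distTriang C, ∃ z : Z, 0 ≤ z ∧ defect ρob T = (q + 1) • z

lemma exists_smul_of_iso (hcongr : SatisfiesCongruence q ρob) {D A B : C} (hD : IsZero D)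
    (e : A ≅ B) : ∃ z : Z, 0 ≤ z ∧ ρob A - ρob B + ρob (D⟦(1 : ℤ)⟧) = (q + 1) • z :=
  hcongr (Triangle.mk (0 : D ⟶ A) e.hom 0)
    ((Triangle.distinguished_iff_of_isZero₁ _ hD).2 (inferInstanceAs (IsIso e.hom)))

lemma apply_zero [AddLeftMono Z] (hreg : Function.Injective fun z : Z => (q + 1) • z)
    (hcongr : SatisfiesCongruence q ρob) (hadd : ∀ X Y : C, ρob (X ⊞ Y) = ρob X + ρob Y)
    (hshift : ∀ X : C, ρob (X⟦(1 : ℤ)⟧) = q • ρob X) : ρob 0 = 0 := by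
  have h₀ : IsZero (0 : C) := isZero_zero C
  have h₁ : IsZero ((0 : C)⟦(1 : ℤ)⟧) := (CategoryTheory.shiftFunctor C 1).map_isZero h₀
  obtain ⟨a, ha, hxa⟩ := exists_smul_of_iso hcongr h₀ (h₀.iso h₁)
  obtain ⟨b, hb, hxb⟩ := exists_smul_of_iso hcongr h₀ (h₀.iso (h₁.biprod (h₀.biprod h₀)))
  refine eq_zero_of_eq_smul_of_neg_eq_smul hreg ha hb ?_ ?_
  · rw [← hxa, hshift]; abel
  · rw [← hxb, hadd, hadd, hshift]; abel

lemma apply_eq_of_iso [AddLeftMono Z] (hreg : Function.Injective fun z : Z => (q + 1) • z)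
    (hcongr : SatisfiesCongruence q ρob) (hshift : ∀ X : C, ρob (X⟦(1 : ℤ)⟧) = q • ρob X)
    (hzero : ρob 0 = 0) {A B : C} (e : A ≅ B) : ρob A = ρob B := by
  have h₀ : ρob ((0 : C)⟦(1 : ℤ)⟧) = 0 := by rw [hshift, hzero, smul_zero]
  obtain ⟨a, ha, hab⟩ := exists_smul_of_iso hcongr (isZero_zero C) e
  obtain ⟨b, hb, hba⟩ := exists_smul_of_iso hcongr (isZero_zero C) e.symm
  rw [h₀, add_zero] at hab hba
  exact sub_eq_zero.1 <| eq_zero_of_eq_smul_of_neg_eq_smul hreg ha hb hab (by rw [neg_sub, hba])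

/-- `Function.invFun` is junk off the image of `(q + 1) • ·`; the congruence axiom puts the
argument in that image. -/
noncomputable def ofObj (q : R) (ρob : C → Z) {X Y : C} (f : X ⟶ Y) : Z :=
  Function.invFun (fun z : Z => (q + 1) • z) (ρob Y - ρob (cone f) + ρob (X⟦(1 : ℤ)⟧))

lemma smul_ofObj (hcongr : SatisfiesCongruence q ρob)
    (hiso : ∀ {A B : C}, (A ≅ B) → ρob A = ρob B) (T : Triangle C) (hT : T ∈ distTriang C) :
    (q + 1) • ofObj q ρob T.mor₁ = defect ρob T := by
  obtain ⟨z, -, hz⟩ := hcongr T hT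
  rw [ofObj, apply_cone_eq hiso hT]
  exact Function.invFun_eq ⟨z, hz.symm⟩

lemma ofObj_nonneg (hreg : Function.Injective fun z : Z => (q + 1) • z)
    (hcongr : SatisfiesCongruence q ρob) {X Y : C} (f : X ⟶ Y) : 0 ≤ ofObj q ρob f := by
  obtain ⟨g, h, hc⟩ := exists_distinguished_cone f
  obtain ⟨z, hz, hdef⟩ := hcongr _ hc
  rwa [ofObj, show ρob Y - ρob (cone f) + ρob (X⟦(1 : ℤ)⟧) = (q + 1) • z from hdef,
    Function.leftInverse_invFun hreg z]

end CategoryTheory.Pretriangulated.RankFunction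

theorem q_rank_function_on_objects_induces_q_rank_function_on_morphisms
    {C : Type u} [Category.{v} C] [Preadditive C] [HasZeroObject C] [HasShift C ℤ]
    [∀ n : ℤ, (shiftFunctor C n).Additive] [Pretriangulated C] [HasBinaryBiproducts C]
    [EssentiallySmall.{v} C]
    {R : Type w} [Ring R] {Z : Type w} [AddCommGroup Z] [Module R Z]
    [PartialOrder Z] [CovariantClass Z Z (· + ·) (· ≤ ·)]
    (q : R)
    -- `q + 1` is `Z`-regular:
    (hreg : Function.Injective fun z : Z => (q + 1) • z)
    (ρob : C → Z)
    -- (O1) non-negativity: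
    (h1 : ∀ X : C, 0 ≤ ρob X)
    -- (O2) additivity:
    (h2 : ∀ X Y : C, ρob (X ⊞ Y) = ρob X + ρob Y)
    -- (O3q) congruence:
    (h3 : ∀ (T : Triangle C), (T ∈ distTriang C) → ∃ z : Z, 0 ≤ z ∧
      ρob T.obj₂ - ρob T.obj₃ + ρob ((shiftFunctor C (1 : ℤ)).obj T.obj₁) = (q + 1) • z)
    -- (O4q) `q`-Σ-invariance:
    (h4 : ∀ X : C, ρob ((shiftFunctor C (1 : ℤ)).obj X) = q • ρob X) :
    ∃ ρ : ∀ ⦃X Y : C⦄, (X ⟶ Y) → Z,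
      -- defining property: `(q+1) • ρ(f) = ρ_ob(Y) - ρ_ob(Cone f) + ρ_ob(ΣX)`
      (∀ (T : Triangle C), (T ∈ distTriang C) →
        (q + 1) • ρ T.mor₁ =
          ρob T.obj₂ - ρob T.obj₃ + ρob ((shiftFunctor C (1 : ℤ)).obj T.obj₁)) ∧
      -- (M1) non-negativity:
      (∀ ⦃X Y : C⦄ (f : X ⟶ Y), 0 ≤ ρ f) ∧
      -- (M2) additivity:
      (∀ ⦃X₁ Y₁ X₂ Y₂ : C⦄ (f : X₁ ⟶ Y₁) (g : X₂ ⟶ Y₂),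
        ρ (biprod.map f g) = ρ f + ρ g) ∧
      -- (M3) rank-nullity:
      (∀ (T : Triangle C), (T ∈ distTriang C) →
        ρ T.mor₁ + ρ T.mor₂ = ρ (𝟙 T.obj₂)) ∧
      -- (M4q) `q`-Σ-invariance:
      (∀ ⦃X Y : C⦄ (f : X ⟶ Y), ρ ((shiftFunctor C (1 : ℤ)).map f) = q • ρ f) := by
  have hcongr : RankFunction.SatisfiesCongruence q ρob := h3
  have hzero : ρob 0 = 0 := RankFunction.apply_zero hreg hcongr h2 h4
  have hρ := RankFunction.smul_ofObj hcongr (RankFunction.apply_eq_of_iso hreg hcongr h4 hzero)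
  exact ⟨fun _ _ f => RankFunction.ofObj q ρob f, hρ,
    fun _ _ => RankFunction.ofObj_nonneg hreg hcongr,
    fun _ _ _ _ => RankFunction.map_biprod hreg h2 h4 hρ,
    RankFunction.add_eq_apply_id hreg hzero hρ,
    fun _ _ f => RankFunction.map_shift hreg h4 hρ f⟩
end

section
/- Let T be a compactly generated triangulated category with C = T^c, and let ρ be a basic rank function on C with associated basic Σ-invariant endofinite object Z_ρ in T (so that ρ(1_X) = length over End_T(Z_ρ) of Hom_T(X, Z_ρ) for compact X). Then the kernel on morphisms of ρ satisfies Ker ρ = {f in C : Hom_T(f, Z_ρ) = 0}. -/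
/-!
Statement 19: Let `T` be a compactly generated triangulated category with `C = T^c`, and
let `ρ` be a basic rank function on `C` whose associated basic Σ-invariant endofinite
object is `Z_ρ` (so that `ρ(1_X)` is the composition length of `Hom_T(X, Z_ρ)` over
`End_T(Z_ρ)` for compact `X`). Then `Ker ρ = {f in C : Hom_T(f, Z_ρ) = 0}`, i.e. for a
morphism `f : X ⟶ Y` between compact objects, `ρ(f) = 0` iff precomposition with `f`
kills every morphism `Y ⟶ Z_ρ`.
-/

open CategoryTheory CategoryTheory.Limits CategoryTheory.Pretriangulated

universe v u

variable {T : Type u} [Category.{v} T] [Preadditive T] [HasZeroObject T] [HasShift T ℤ]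
  [∀ n : ℤ, (shiftFunctor T n).Additive] [Pretriangulated T] [HasBinaryBiproducts T]
  [HasCoproducts.{v} T]

/-- An object is compact if every morphism into a coproduct factors through a finite
subcoproduct (in a triangulated category with coproducts this is equivalent to
`Hom(X, -)` preserving coproducts). -/
def IsCompactObj (X : T) : Prop :=
  ∀ (ι : Type v) (Y : ι → T) (φ : X ⟶ ∐ Y),
    ∃ (s : Finset ι) (ψ : X ⟶ ∐ fun i : s => Y i),
      φ = ψ ≫ Sigma.desc fun i : s => Sigma.ι Y i.1

/-- An object `Z` is endofinite if `Hom_T(X, Z)` has finite length over `End_T(Z)` for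
every compact `X`. -/
def IsEndofinite (Z : T) : Prop :=
  ∀ X : T, IsCompactObj X → IsFiniteLength (End Z) (X ⟶ Z)

/-! Write `ℓ(f)` for the length over `End Z` of the image of `Hom(f, Z)`. Since `Hom(-, Z)` is
cohomological, `ℓ(mor₁) + ℓ(mor₂) = length Hom(obj₂, Z) = ρ(1_{obj₂})` on every distinguished
triangle, which is the same additivity law that `ρ` obeys. Applied to a triangle `f, g, h` and to
its rotations `g, h, -Σf` and `h, Σf, Σg` (using `ρ(Σf) = ρ(f)` and `ℓ(Σf) = ℓ(f)`, the latter from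
`ΣZ ≅ Z`), the defect `d = ρ - ℓ` satisfies `d f + d g = d g + d h = d h + d f = 0`, so `d f = 0`.
Hence `ρ f = 0` iff the image of `Hom(f, Z)` vanishes. -/

section Subcoproduct

variable {D : Type u} [Category.{v} D] [HasCoproducts.{v} D]

def FactorsThroughSubcoproduct {X : D} {ι : Type v} {Y : ι → D} (φ : X ⟶ ∐ Y)
    (s : Finset ι) : Prop :=
  ∃ ψ : X ⟶ ∐ fun i : s => Y i, φ = ψ ≫ Sigma.desc fun i : s => Sigma.ι Y i.1

variable {X : D} {ι : Type v} {Y : ι → D}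

theorem factorsThroughSubcoproduct_comp_desc {s : Finset ι} (ψ : X ⟶ ∐ fun i : s => Y i) :
    FactorsThroughSubcoproduct (ψ ≫ Sigma.desc fun i : s => Sigma.ι Y i.1) s :=
  ⟨ψ, rfl⟩

theorem FactorsThroughSubcoproduct.precomp {φ : X ⟶ ∐ Y} {s : Finset ι}
    (h : FactorsThroughSubcoproduct φ s) {W : D} (g : W ⟶ X) :
    FactorsThroughSubcoproduct (g ≫ φ) s := by
  obtain ⟨ψ, rfl⟩ := h
  exact ⟨g ≫ ψ, (Category.assoc _ _ _).symm⟩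

theorem FactorsThroughSubcoproduct.mono {φ : X ⟶ ∐ Y} {s t : Finset ι}
    (h : FactorsThroughSubcoproduct φ s) (hst : s ⊆ t) : FactorsThroughSubcoproduct φ t := by
  obtain ⟨ψ, rfl⟩ := h
  refine ⟨ψ ≫ Sigma.desc fun i : s => Sigma.ι (fun j : t => Y j) ⟨i, hst i.2⟩, ?_⟩
  rw [Category.assoc]
  congr 1
  ext i
  simp

theorem FactorsThroughSubcoproduct.add [Preadditive D] {φ₁ φ₂ : X ⟶ ∐ Y} {s : Finset ι}
    (h₁ : FactorsThroughSubcoproduct φ₁ s) (h₂ : FactorsThroughSubcoproduct φ₂ s) :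
    FactorsThroughSubcoproduct (φ₁ + φ₂) s := by
  obtain ⟨ψ₁, rfl⟩ := h₁
  obtain ⟨ψ₂, rfl⟩ := h₂
  exact ⟨ψ₁ + ψ₂, (Preadditive.add_comp _ _ _ _ _ _).symm⟩

open Classical in
noncomputable def CategoryTheory.Limits.Sigma.restrict [Preadditive D] (Y : ι → D) (s : Finset ι) :
    ∐ Y ⟶ ∐ fun i : s => Y i :=
  Sigma.desc fun i => if h : i ∈ s then Sigma.ι (fun j : s => Y j) ⟨i, h⟩ else 0

theorem CategoryTheory.Limits.Sigma.desc_ι_comp_restrict [Preadditive D] (s : Finset ι) :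
    (Sigma.desc fun i : s => Sigma.ι Y i.1) ≫ Sigma.restrict Y s = 𝟙 _ := by
  ext i
  simp [Sigma.restrict]

end Subcoproduct

section Compact

variable {D : Type u} [Category.{v} D] [Preadditive D] [HasZeroObject D] [HasShift D ℤ]
  [∀ n : ℤ, (shiftFunctor D n).Additive] [Pretriangulated D] [HasCoproducts.{v} D]

theorem IsCompactObj.of_equivalence (e : D ≌ D) {X : D} (hX : IsCompactObj X) :
    IsCompactObj (e.functor.obj X) := by
  intro ι Y φ
  let G := e.inverse
  obtain ⟨s, ψ, hψ⟩ :=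
    hX ι (fun i => G.obj (Y i)) (e.toAdjunction.homEquiv _ _ φ ≫ inv (sigmaComparison G Y))
  refine ⟨s, (e.toAdjunction.homEquiv _ _).symm (ψ ≫ sigmaComparison G _), ?_⟩
  rw [← Adjunction.homEquiv_naturality_right_symm, Equiv.eq_symm_apply,
    (IsIso.comp_inv_eq _).mp hψ, Category.assoc, Category.assoc, sigmaComparison_map_desc]
  congr 1
  ext i
  simp

theorem IsCompactObj.shift {X : D} (hX : IsCompactObj X) : IsCompactObj (X⟦(1 : ℤ)⟧) :=
  hX.of_equivalence (shiftEquiv D (1 : ℤ))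

theorem IsCompactObj.obj₃_of_distTriang {Tr : Triangle D} (hT : Tr ∈ distTriang D)
    (h₁ : IsCompactObj Tr.obj₁) (h₂ : IsCompactObj Tr.obj₂) : IsCompactObj Tr.obj₃ := by
  classical
  intro ι Y φ
  -- Subtract from `φ` its part through `s`, so that what is left vanishes on `mor₂` and hence
  -- factors through `mor₃` and the compact object `obj₁⟦1⟧`.
  obtain ⟨s, ψ, hψ⟩ := h₂ ι Y (Tr.mor₂ ≫ φ)
  let ε : (∐ fun i : s => Y i) ⟶ ∐ Y := Sigma.desc fun i : s => Sigma.ι Y i.1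
  have hkill : Tr.mor₂ ≫ (φ - φ ≫ Sigma.restrict Y s ≫ ε) = 0 := by
    rw [Preadditive.comp_sub, reassoc_of% hψ, reassoc_of% (Sigma.desc_ι_comp_restrict s)]
    exact sub_eq_zero.mpr hψ
  obtain ⟨θ, hθ⟩ := Triangle.yoneda_exact₃ Tr hT _ hkill
  obtain ⟨t, hθt⟩ : ∃ t, FactorsThroughSubcoproduct θ t := h₁.shift ι Y θ
  have hφ : φ = (φ ≫ Sigma.restrict Y s) ≫ ε + Tr.mor₃ ≫ θ := by
    rw [← hθ, Category.assoc]; abel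
  rw [hφ]
  exact ⟨s ∪ t, ((factorsThroughSubcoproduct_comp_desc _).mono Finset.subset_union_left).add
    ((hθt.precomp _).mono Finset.subset_union_right)⟩

end Compact

theorem Module.length_eq_of_semilinearEquiv {R S M N : Type*} [Ring R] [Ring S]
    [AddCommGroup M] [Module R M] [AddCommGroup N] [Module S N] {σ : R →+* S} {σ' : S →+* R}
    [RingHomInvPair σ σ'] [RingHomInvPair σ' σ] (e : M ≃ₛₗ[σ] N) :
    Module.length R M = Module.length S N := by
  rw [Module.length, Module.length, WithBot.unbot_inj,
    Order.krullDim_eq_of_orderIso (Submodule.orderIsoMapComap e)]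

namespace CategoryTheory

variable {C : Type*} [Category C] [Preadditive C]

@[simps]
def Preadditive.leftCompEnd (Z : C) {X Y : C} (f : X ⟶ Y) : (Y ⟶ Z) →ₗ[End Z] (X ⟶ Z) where
  toFun m := f ≫ m
  map_add' _ _ := Preadditive.comp_add _ _ _ _ _ _
  map_smul' r m := by simp [End.smul_right]

open Preadditive

noncomputable def homImageLength (Z : C) {X Y : C} (f : X ⟶ Y) : ℕ∞ :=
  Module.length (End Z) (LinearMap.range (leftCompEnd Z f))

theorem homImageLength_eq_zero_iff (Z : C) {X Y : C} (f : X ⟶ Y) :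
    homImageLength Z f = 0 ↔ ∀ g : Y ⟶ Z, f ≫ g = 0 := by
  rw [homImageLength, Module.length_eq_zero_iff, Submodule.subsingleton_iff_eq_bot,
    LinearMap.range_eq_bot, LinearMap.ext_iff]
  simp only [leftCompEnd_apply, LinearMap.zero_apply]

theorem homImageLength_ne_top {Z X Y : C} (f : X ⟶ Y) (h : IsFiniteLength (End Z) (X ⟶ Z)) :
    homImageLength Z f ≠ ⊤ :=
  Module.length_ne_top_iff.mpr <|
    h.of_injective (f := (LinearMap.range (leftCompEnd Z f)).subtype) Subtype.val_injective

section Shift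

variable [HasShift C ℤ] [∀ n : ℤ, (shiftFunctor C n).Additive] {Z : C} (e : Z⟦(1 : ℤ)⟧ ≅ Z)

@[simps]
noncomputable def shiftConjRingEquiv : End Z ≃+* End Z where
  toFun r := e.inv ≫ r⟦(1 : ℤ)⟧' ≫ e.hom
  invFun r := (shiftFunctor C (1 : ℤ)).preimage (e.hom ≫ r ≫ e.inv)
  left_inv r := by simp
  right_inv r := by simp
  map_mul' r s := by simp [End.mul_def]
  map_add' r s := by simp [(shiftFunctor C (1 : ℤ)).map_add (f := r) (g := s)]

instance : RingHomInvPair (shiftConjRingEquiv e : End Z →+* End Z) (shiftConjRingEquiv e).symm :=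
  .of_ringEquiv _

instance : RingHomInvPair ((shiftConjRingEquiv e).symm : End Z →+* End Z) (shiftConjRingEquiv e) :=
  .of_ringEquiv_symm _

@[simps!]
noncomputable def shiftHomEquiv (W : C) :
    (W ⟶ Z) ≃ₛₗ[(shiftConjRingEquiv e : End Z →+* End Z)] (W⟦(1 : ℤ)⟧ ⟶ Z) where
  toFun m := m⟦(1 : ℤ)⟧' ≫ e.hom
  invFun n := (shiftFunctor C (1 : ℤ)).preimage (n ≫ e.inv)
  left_inv m := by simp
  right_inv n := by simp
  map_add' m n := by simp
  map_smul' r m := by simp [End.smul_right]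

theorem shiftHomEquiv_comp {X Y : C} (f : X ⟶ Y) (m : Y ⟶ Z) :
    shiftHomEquiv e X (f ≫ m) = f⟦(1 : ℤ)⟧' ≫ shiftHomEquiv e Y m := by
  simp

theorem range_leftCompEnd_shift {X Y : C} (f : X ⟶ Y) :
    LinearMap.range (leftCompEnd Z (f⟦(1 : ℤ)⟧')) =
      (LinearMap.range (leftCompEnd Z f)).map (shiftHomEquiv e X).toLinearMap := by
  ext n
  simp only [Submodule.mem_map, LinearMap.mem_range, leftCompEnd_apply, LinearEquiv.coe_coe]
  constructor
  · rintro ⟨m', rfl⟩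
    obtain ⟨m, rfl⟩ := (shiftHomEquiv e Y).surjective m'
    exact ⟨f ≫ m, ⟨m, rfl⟩, shiftHomEquiv_comp e f m⟩
  · rintro ⟨_, ⟨m, rfl⟩, rfl⟩
    exact ⟨shiftHomEquiv e Y m, (shiftHomEquiv_comp e f m).symm⟩

theorem homImageLength_shift (hZ : Nonempty (Z⟦(1 : ℤ)⟧ ≅ Z)) {X Y : C} (f : X ⟶ Y) :
    homImageLength Z (f⟦(1 : ℤ)⟧') = homImageLength Z f := by
  obtain ⟨e⟩ := hZ
  rw [homImageLength, homImageLength, range_leftCompEnd_shift e f]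
  exact (Module.length_eq_of_semilinearEquiv (Submodule.equivMapOfInjective _
    (shiftHomEquiv e X).injective (LinearMap.range (leftCompEnd Z f)))).symm

end Shift

variable [HasZeroObject C] [HasShift C ℤ] [∀ n : ℤ, (shiftFunctor C n).Additive]
  [Pretriangulated C]

theorem ker_leftCompEnd_mor₁ {Tr : Triangle C} (hT : Tr ∈ distTriang C) (Z : C) :
    LinearMap.ker (leftCompEnd Z Tr.mor₁) = LinearMap.range (leftCompEnd Z Tr.mor₂) := by
  ext m
  simp only [LinearMap.mem_ker, LinearMap.mem_range, leftCompEnd_apply]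
  constructor
  · intro hm
    obtain ⟨g, rfl⟩ := Triangle.yoneda_exact₂ _ hT m hm
    exact ⟨g, rfl⟩
  · rintro ⟨n, rfl⟩
    simp [comp_distTriang_mor_zero₁₂_assoc _ hT n]

theorem length_hom_obj₂ {Tr : Triangle C} (hT : Tr ∈ distTriang C) (Z : C) :
    Module.length (End Z) (Tr.obj₂ ⟶ Z) = homImageLength Z Tr.mor₂ + homImageLength Z Tr.mor₁ :=
  Module.length_eq_add_of_exact _ (leftCompEnd Z Tr.mor₁).rangeRestrict Subtype.val_injective
    (LinearMap.surjective_rangeRestrict _) <| LinearMap.exact_iff.mpr <| by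
      rw [LinearMap.ker_rangeRestrict, Submodule.range_subtype, ker_leftCompEnd_mor₁ hT]

theorem toNat_length_hom_obj₂ {Tr : Triangle C} (hT : Tr ∈ distTriang C) {Z : C}
    (h : IsFiniteLength (End Z) (Tr.obj₂ ⟶ Z)) :
    (Module.length (End Z) (Tr.obj₂ ⟶ Z)).toNat =
      (homImageLength Z Tr.mor₁).toNat + (homImageLength Z Tr.mor₂).toNat := by
  have hfin := Module.length_ne_top_iff.mpr h
  rw [length_hom_obj₂ hT] at hfin ⊢
  rw [add_comm, ENat.toNat_add (WithTop.add_ne_top.mp hfin).2 (WithTop.add_ne_top.mp hfin).1]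

theorem Pretriangulated.mk_mem_distTriang_of_neg {X Y W : C} (u : X ⟶ Y) (v : Y ⟶ W)
    (w : W ⟶ X⟦(1 : ℤ)⟧) (h : Triangle.mk u (-v) (-w) ∈ distTriang C) :
    Triangle.mk u v w ∈ distTriang C := by
  let ε : W ≅ W := Iso.mk (-𝟙 W) (-𝟙 W) (by simp) (by simp)
  refine isomorphic_distinguished _ h _ <| Triangle.isoMk _ _ (Iso.refl X) (Iso.refl Y) ε ?_ ?_ ?_
  · exact (Category.comp_id u).trans (Category.id_comp u).symm
  · show v ≫ (-𝟙 W) = 𝟙 Y ≫ (-v)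
    simp
  · show w ≫ (𝟙 X)⟦(1 : ℤ)⟧' = (-𝟙 W) ≫ (-w)
    simp

end CategoryTheory

section RankFunction

variable {D : Type u} [Category.{v} D] [Preadditive D] [HasZeroObject D] [HasShift D ℤ]
  [∀ n : ℤ, (shiftFunctor D n).Additive] [Pretriangulated D] [HasCoproducts.{v} D]
  {Z : D} {ρ : ∀ ⦃X Y : D⦄, (X ⟶ Y) → ℝ}

theorem rank_mor₁_add_rank_mor₂_eq
    (hnull : ∀ (Tr : Triangle D), (Tr ∈ distTriang D) → IsCompactObj Tr.obj₁ →
      IsCompactObj Tr.obj₂ → IsCompactObj Tr.obj₃ → ρ Tr.mor₁ + ρ Tr.mor₂ = ρ (𝟙 Tr.obj₂))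
    (hval : ∀ X : D, IsCompactObj X → ∃ s : CompositionSeries (Submodule (End Z) (X ⟶ Z)),
      s.head = ⊥ ∧ s.last = ⊤ ∧ ρ (𝟙 X) = s.length)
    {Tr : Triangle D} (hT : Tr ∈ distTriang D) (h₁ : IsCompactObj Tr.obj₁)
    (h₂ : IsCompactObj Tr.obj₂) :
    ρ Tr.mor₁ + ρ Tr.mor₂ = (homImageLength Z Tr.mor₁).toNat + (homImageLength Z Tr.mor₂).toNat := by
  obtain ⟨s, hs₁, hs₂, hρ⟩ := hval _ h₂
  rw [hnull Tr hT h₁ h₂ (IsCompactObj.obj₃_of_distTriang hT h₁ h₂), hρ, ← Nat.cast_add,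
    ← toNat_length_hom_obj₂ hT (isFiniteLength_of_exists_compositionSeries ⟨s, hs₁, hs₂⟩),
    ← Module.length_compositionSeries s hs₁ hs₂, ENat.toNat_natCast]

theorem rank_eq_toNat_homImageLength (hshift : Nonempty (Z⟦(1 : ℤ)⟧ ≅ Z))
    (hnull : ∀ (Tr : Triangle D), (Tr ∈ distTriang D) → IsCompactObj Tr.obj₁ →
      IsCompactObj Tr.obj₂ → IsCompactObj Tr.obj₃ → ρ Tr.mor₁ + ρ Tr.mor₂ = ρ (𝟙 Tr.obj₂))
    (hshiftInv : ∀ ⦃X Y : D⦄, IsCompactObj X → IsCompactObj Y → ∀ f : X ⟶ Y,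
      ρ (f⟦(1 : ℤ)⟧') = ρ f)
    (hval : ∀ X : D, IsCompactObj X → ∃ s : CompositionSeries (Submodule (End Z) (X ⟶ Z)),
      s.head = ⊥ ∧ s.last = ⊤ ∧ ρ (𝟙 X) = s.length)
    {X Y : D} (hX : IsCompactObj X) (hY : IsCompactObj Y) (f : X ⟶ Y) :
    ρ f = (homImageLength Z f).toNat := by
  obtain ⟨W, g, h, hT⟩ := distinguished_cocone_triangle f
  have hW : IsCompactObj W := IsCompactObj.obj₃_of_distTriang hT hX hY
  have hT' := rot_of_distTriang _ hT
  have hT'' := mk_mem_distTriang_of_neg h (f⟦(1 : ℤ)⟧') (g⟦(1 : ℤ)⟧')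
    (rot_of_distTriang _ hT')
  have e₁ : ρ f + ρ g = (homImageLength Z f).toNat + (homImageLength Z g).toNat :=
    rank_mor₁_add_rank_mor₂_eq hnull hval hT hX hY
  have e₂ : ρ g + ρ h = (homImageLength Z g).toNat + (homImageLength Z h).toNat :=
    rank_mor₁_add_rank_mor₂_eq hnull hval hT' hY hW
  have e₃ : ρ h + ρ f = (homImageLength Z h).toNat + (homImageLength Z f).toNat := by
    rw [← hshiftInv hX hY f, ← homImageLength_shift hshift f]
    exact rank_mor₁_add_rank_mor₂_eq hnull hval hT'' hW hX.shift
  linarith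

end RankFunction

theorem kernel_of_basic_rankFunction_eq_annihilator_general
    -- the associated object `Z_ρ`: basic, Σ-invariant and endofinite
    (Zρ : T)
    (hshift : Nonempty ((shiftFunctor T (1 : ℤ)).obj Zρ ≅ Zρ))
    -- `ρ` is a rank function on `C = T^c`:
    (ρ : ∀ ⦃X Y : T⦄, (X ⟶ Y) → ℝ)
    (hnull : ∀ (Tr : Triangle T), (Tr ∈ distTriang T) → IsCompactObj Tr.obj₁ →
      IsCompactObj Tr.obj₂ → IsCompactObj Tr.obj₃ →
        ρ Tr.mor₁ + ρ Tr.mor₂ = ρ (𝟙 Tr.obj₂))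
    (hshiftInv : ∀ ⦃X Y : T⦄, IsCompactObj X → IsCompactObj Y → ∀ f : X ⟶ Y,
      ρ ((shiftFunctor T (1 : ℤ)).map f) = ρ f)
    -- `ρ(1_X)` is the composition length of `Hom_T(X, Z_ρ)` over `End_T(Z_ρ)`:
    (hval : ∀ X : T, IsCompactObj X →
      ∃ s : CompositionSeries (Submodule (End Zρ) (X ⟶ Zρ)),
        s.head = ⊥ ∧ s.last = ⊤ ∧ ρ (𝟙 X) = s.length) :
    ∀ ⦃X Y : T⦄, IsCompactObj X → IsCompactObj Y → ∀ f : X ⟶ Y,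
      (ρ f = 0 ↔ ∀ g : Y ⟶ Zρ, f ≫ g = 0) := by
  intro X Y hX hY f
  obtain ⟨s, hs₁, hs₂, -⟩ := hval X hX
  have hfin : homImageLength Zρ f ≠ ⊤ :=
    homImageLength_ne_top f (isFiniteLength_of_exists_compositionSeries ⟨s, hs₁, hs₂⟩)
  rw [rank_eq_toNat_homImageLength hshift hnull hshiftInv hval hX hY f, Nat.cast_eq_zero,
    ENat.toNat_eq_zero, or_iff_left hfin, homImageLength_eq_zero_iff]

theorem kernel_of_basic_rankFunction_eq_annihilator
    -- `T` is compactly generated: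
    (hgen : ∀ Y : T, (∀ X : T, IsCompactObj X → ∀ g : X ⟶ Y, g = 0) → IsZero Y)
    (hsmall : EssentiallySmall.{v} (ObjectProperty.FullSubcategory fun X : T => IsCompactObj X))
    -- the associated object `Z_ρ`: basic, Σ-invariant and endofinite
    (Zρ : T)
    (hbasic : ∃ (I : Type v) (Zi : I → T), (∀ i, IsLocalRing (End (Zi i))) ∧
      (∀ i j, i ≠ j → IsEmpty (Zi i ≅ Zi j)) ∧ Nonempty (Zρ ≅ ∐ Zi))
    (hshift : Nonempty ((shiftFunctor T (1 : ℤ)).obj Zρ ≅ Zρ))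
    (hendo : IsEndofinite Zρ)
    -- `ρ` is a rank function on `C = T^c`:
    (ρ : ∀ ⦃X Y : T⦄, (X ⟶ Y) → ℝ)
    (hnonneg : ∀ ⦃X Y : T⦄, IsCompactObj X → IsCompactObj Y → ∀ f : X ⟶ Y, 0 ≤ ρ f)
    (hadd : ∀ ⦃X₁ Y₁ X₂ Y₂ : T⦄, IsCompactObj X₁ → IsCompactObj Y₁ → IsCompactObj X₂ →
      IsCompactObj Y₂ → ∀ (f : X₁ ⟶ Y₁) (g : X₂ ⟶ Y₂),
        ρ (biprod.map f g) = ρ f + ρ g)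
    (hnull : ∀ (Tr : Triangle T), (Tr ∈ distTriang T) → IsCompactObj Tr.obj₁ →
      IsCompactObj Tr.obj₂ → IsCompactObj Tr.obj₃ →
        ρ Tr.mor₁ + ρ Tr.mor₂ = ρ (𝟙 Tr.obj₂))
    (hshiftInv : ∀ ⦃X Y : T⦄, IsCompactObj X → IsCompactObj Y → ∀ f : X ⟶ Y,
      ρ ((shiftFunctor T (1 : ℤ)).map f) = ρ f)
    -- `ρ(1_X)` is the composition length of `Hom_T(X, Z_ρ)` over `End_T(Z_ρ)`:
    (hval : ∀ X : T, IsCompactObj X →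
      ∃ s : CompositionSeries (Submodule (End Zρ) (X ⟶ Zρ)),
        s.head = ⊥ ∧ s.last = ⊤ ∧ ρ (𝟙 X) = s.length) :
    ∀ ⦃X Y : T⦄, IsCompactObj X → IsCompactObj Y → ∀ f : X ⟶ Y,
      (ρ f = 0 ↔ ∀ g : Y ⟶ Zρ, f ≫ g = 0) :=
  kernel_of_basic_rankFunction_eq_annihilator_general Zρ hshift ρ hnull hshiftInv hval
end
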